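/- The generating function T(x) of the central trinomial coefficients T_n = ∑_{d=0}^n (n choose 2d)(2d choose d) satisfies T(x)² · (1 - 2x - 3x²) = 1 as formal power series over ℚ. -/

import Mathlib

/-!
With `C(y) = ∑ binom(2d, d) yᵈ = (1 - 4y)^(-1/2)`, the expansion
`∑ₙ binom(n, k) xⁿ = xᵏ / (1 - x)^(k+1)` gives `T(x) = (1 - x)⁻¹ · C(x² / (1 - x)²)`. Hence
`T(x)² (1 - x)² (1 - 4x² / (1 - x)²) = 1`, and `(1 - x)² - 4x² = 1 - 2x - 3x²`.
-/

open PowerSeries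
open Finset hiding mk

namespace Ring

theorem succ_nsmul_choose_succ {R : Type*} [NonAssocRing R] [Pow R ℕ] [NatPowAssoc R]
    [BinomialRing R] (r : R) (k : ℕ) :
    (k + 1) • choose r (k + 1) = choose r k * (r - k) := by
  simpa [Nat.choose_succ_self_right, choose_one_right] using
    choose_smul_choose r (Nat.le_add_right k 1)

end Ring

theorem neg_four_pow_mul_choose_neg_half (n : ℕ) :
    (-4 : ℚ) ^ n * Ring.choose (-(1 / 2) : ℚ) n = n.centralBinom := by
  induction n with
  | zero => simp
  | succ k ih =>
    have hrec : ((k + 1 : ℕ) : ℚ) * (k + 1).centralBinom = 2 * (2 * k + 1) * k.centralBinom := by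
      exact_mod_cast Nat.succ_mul_centralBinom_succ k
    have hchoose := Ring.succ_nsmul_choose_succ (-(1 / 2) : ℚ) k
    push_cast [nsmul_eq_mul] at hrec hchoose
    apply mul_left_cancel₀ (by positivity : (k + 1 : ℚ) ≠ 0)
    rw [hrec, ← ih]
    linear_combination (-4 : ℚ) ^ (k + 1) * hchoose

noncomputable def centralBinomSeries (R : Type*) [Semiring R] : R⟦X⟧ :=
  mk fun n => (n.centralBinom : R)

theorem centralBinomSeries_eq_rescale_binomialSeries :
    centralBinomSeries ℚ = rescale (-4 : ℚ) (binomialSeries ℚ (-(1 / 2) : ℚ)) := by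
  ext n
  rw [coeff_rescale, binomialSeries_coeff, smul_eq_mul, mul_one, neg_four_pow_mul_choose_neg_half,
    centralBinomSeries, coeff_mk]

theorem centralBinomSeries_sq_mul_one_sub_four_mul_X :
    centralBinomSeries ℚ ^ 2 * (1 - 4 * X) = 1 := by
  have h : (1 - 4 * X : ℚ⟦X⟧) = rescale (-4 : ℚ) (binomialSeries ℚ ((1 : ℕ) : ℚ)) := by
    rw [binomialSeries_nat, pow_one, map_add, map_one, rescale_X, map_neg, map_ofNat]
    ring
  rw [h, centralBinomSeries_eq_rescale_binomialSeries, ← map_pow, ← map_mul, sq,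
    ← binomialSeries_add, ← binomialSeries_add]
  norm_num

section Substitution

variable {R : Type*} [CommRing R]

theorem coeff_subst_eq_sum_range {a : R⟦X⟧} (ha : constantCoeff a = 0) (f : R⟦X⟧)
    {j n : ℕ} (hj : j ≤ n) :
    coeff j (f.subst a) = ∑ k ∈ range (n + 1), coeff k f * coeff j (a ^ k) := by
  rw [coeff_subst' (HasSubst.of_constantCoeff_zero' ha)]
  refine finsum_eq_sum_of_support_subset _ fun k hk => mem_coe.mpr (mem_range.mpr ?_)
  by_contra! hnk
  have hak : X ^ k ∣ a ^ k := pow_dvd_pow_of_dvd (X_dvd_iff.mpr ha) k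
  exact hk (by simp only [X_pow_dvd_iff.mp hak j (by omega), smul_zero])

theorem coeff_mul_subst {a : R⟦X⟧} (ha : constantCoeff a = 0) (g f : R⟦X⟧) (n : ℕ) :
    coeff n (g * f.subst a) = ∑ k ∈ range (n + 1), coeff k f * coeff n (g * a ^ k) := by
  rw [coeff_mul, sum_congr rfl fun p hp =>
    by rw [coeff_subst_eq_sum_range ha f (HasAntidiagonal.antidiagonal.snd_le hp)]]
  simp only [coeff_mul, mul_sum]
  rw [sum_comm]
  exact sum_congr rfl fun k _ => sum_congr rfl fun p _ => by ring

theorem coeff_mk_one_mul_X_mul_mk_one_pow (n k : ℕ) :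
    coeff n (mk 1 * (X * mk 1) ^ k : R⟦X⟧) = n.choose k := by
  rw [mul_pow, mul_left_comm, ← pow_succ', mk_one_pow_eq_mk_choose_add, coeff_X_pow_mul']
  split_ifs with hkn
  · rw [coeff_mk, Nat.add_sub_cancel' hkn]
  · rw [Nat.choose_eq_zero_of_lt (not_le.mp hkn), Nat.cast_zero]

theorem mk_sum_choose_mul_centralBinom_eq_mk_one_mul_subst :
    (mk fun n => ∑ d ∈ range (n + 1), (n.choose (2 * d) : R) * d.centralBinom) =
      mk 1 * (centralBinomSeries R).subst ((X * mk 1) ^ 2) := by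
  ext n
  rw [coeff_mk, coeff_mul_subst (by simp) _ _ n]
  refine sum_congr rfl fun d _ => ?_
  rw [← pow_mul, coeff_mk_one_mul_X_mul_mk_one_pow, centralBinomSeries, coeff_mk, mul_comm]

end Substitution

theorem central_trinomial_gf_sq :
    (PowerSeries.mk fun n =>
        ∑ d ∈ Finset.range (n + 1), (n.choose (2 * d) : ℚ) * ((2 * d).choose d : ℚ)) ^ 2 *
      (1 - 2 * PowerSeries.X - 3 * PowerSeries.X ^ 2) = 1 := by
  have hy : HasSubst ((X * mk 1 : ℚ⟦X⟧) ^ 2) := HasSubst.of_constantCoeff_zero' (by simp)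
  have hB := congrArg (substAlgHom hy) centralBinomSeries_sq_mul_one_sub_four_mul_X
  rw [map_mul, map_pow, map_sub, map_mul, map_one, map_ofNat, substAlgHom_X, coe_substAlgHom] at hB
  simp only [← Nat.centralBinom_eq_two_mul_choose]
  rw [mk_sum_choose_mul_centralBinom_eq_mk_one_mul_subst]
  linear_combination hB + ((centralBinomSeries ℚ).subst ((X * mk 1 : ℚ⟦X⟧) ^ 2)) ^ 2 *
    (mk 1 * (1 - X) + 1) * mk_one_mul_one_sub_eq_one ℚ
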